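/- Every prime ideal of A⋈^f J is of exactly one of the following two forms: P'^f := {(p, f(p)+j) : p ∈ P, j ∈ J} for a (unique) prime ideal P of A, or Q̄^f := {(a, f(a)+j) : a ∈ A, j ∈ J, f(a)+j ∈ Q} for a (unique) prime ideal Q of B not containing J. Conversely, P'^f is a prime ideal of A⋈^f J for every prime ideal P of A, and Q̄^f is a prime ideal of A⋈^f J for every prime ideal Q of B with J ⊄ Q. -/

import Mathlib

section Amalgamation

variable {A B : Type*} [CommRing A] [CommRing B]

/-- The amalgamation `A ⋈^f J` of `A` with `B` along the ideal `J` of `B` with respect to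
the ring homomorphism `f : A → B`, realized as the subring
`{(a, f a + j) | a ∈ A, j ∈ J}` of `A × B`. -/
def amalg (f : A →+* B) (J : Ideal B) : Subring (A × B) where
  carrier := {x : A × B | x.2 - f x.1 ∈ J}
  zero_mem' := by simp
  one_mem' := by simp
  add_mem' := by
    intro x y hx hy
    simp only [Set.mem_setOf_eq, Prod.fst_add, Prod.snd_add, map_add] at *
    have h : x.2 + y.2 - (f x.1 + f y.1) = x.2 - f x.1 + (y.2 - f y.1) := by ring
    rw [h]; exact J.add_mem hx hy
  neg_mem' := by
    intro x hx
    simp only [Set.mem_setOf_eq, Prod.fst_neg, Prod.snd_neg, map_neg] at *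
    have h : -x.2 - -f x.1 = -(x.2 - f x.1) := by ring
    rw [h]; exact J.neg_mem hx
  mul_mem' := by
    intro x y hx hy
    simp only [Set.mem_setOf_eq, Prod.fst_mul, Prod.snd_mul, map_mul] at *
    have h : x.2 * y.2 - f x.1 * f y.1 = x.2 * (y.2 - f y.1) + (x.2 - f x.1) * f y.1 := by ring
    rw [h]
    exact J.add_mem (J.mul_mem_left _ hy) (J.mul_mem_right _ hx)

lemma mem_amalg_iff (f : A →+* B) (J : Ideal B) (x : A × B) :
    x ∈ amalg f J ↔ x.2 - f x.1 ∈ J := Iff.rfl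

/-- The natural projection `p_A : A ⋈^f J → A`. -/
def pA (f : A →+* B) (J : Ideal B) : amalg f J →+* A :=
  (RingHom.fst A B).comp (amalg f J).subtype

/-- The natural projection `p_B : A ⋈^f J → B`. -/
def pB (f : A →+* B) (J : Ideal B) : amalg f J →+* B :=
  (RingHom.snd A B).comp (amalg f J).subtype

/-- For an ideal `P` of `A`, the ideal `P'^f = P ⋈^f J = {(p, f p + j) | p ∈ P, j ∈ J}`
of `A ⋈^f J`. -/
def idealPf (f : A →+* B) (J : Ideal B) (P : Ideal A) : Ideal (amalg f J) :=
  Submodule.copy (Ideal.comap (pA f J) P)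
    {x : amalg f J | ∃ p ∈ P, ∃ j ∈ J, (x : A × B) = (p, f p + j)}
    (by
      ext x
      simp only [Set.mem_setOf_eq, SetLike.mem_coe, Ideal.mem_comap]
      constructor
      · rintro ⟨p, hp, j, hj, hx⟩
        have h1 : pA f J x = p := by
          show (x : A × B).1 = p
          rw [hx]
        rw [h1]; exact hp
      · intro hx
        refine ⟨(x : A × B).1, hx, (x : A × B).2 - f (x : A × B).1,
          (mem_amalg_iff f J _).mp x.2, ?_⟩
        ext <;> simp)

/-- For an ideal `Q` of `B`, the ideal `Q̄^f = {(a, f a + j) | a ∈ A, j ∈ J, f a + j ∈ Q}`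
of `A ⋈^f J`. -/
def idealQf (f : A →+* B) (J : Ideal B) (Q : Ideal B) : Ideal (amalg f J) :=
  Submodule.copy (Ideal.comap (pB f J) Q)
    {x : amalg f J | ∃ a : A, ∃ j ∈ J, (x : A × B) = (a, f a + j) ∧ f a + j ∈ Q}
    (by
      ext x
      simp only [Set.mem_setOf_eq, SetLike.mem_coe, Ideal.mem_comap]
      constructor
      · rintro ⟨a, j, hj, hx, hQ⟩
        have h1 : pB f J x = f a + j := by
          show (x : A × B).2 = f a + j
          rw [hx]
        rw [h1]; exact hQ
      · intro hx
        refine ⟨(x : A × B).1, (x : A × B).2 - f (x : A × B).1,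
          (mem_amalg_iff f J _).mp x.2, by ext <;> simp, ?_⟩
        have hx' : (x : A × B).2 ∈ Q := hx
        simpa using hx')

end Amalgamation

/-!
The primes `H` of `A ⋈^f J` containing `ker p_A = 0 × J` are the pullbacks of the primes of
`A ≅ (A ⋈^f J) / ker p_A`. If instead `e ∈ ker p_A` lies outside `H`, then `p_B` becomes an
isomorphism after inverting `e`: `e` kills `ker p_B` and `p_B e * B` lies in the image of `p_B`.
Writing `e = (0, j)`, `H` is thus the pullback of the prime `{b | (0, j * b) ∈ H}` of `B`,
which misses `j ∈ J`.
-/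

namespace Ideal

variable {R S : Type*} [CommRing R] [CommRing S] (φ : R →+* S) {e : R}

theorem mem_iff_of_ker_le {H : Ideal R} (hker : RingHom.ker φ ≤ H) {r r' : R}
    (h : φ r = φ r') : r ∈ H ↔ r' ∈ H := by
  have hsub : r - r' ∈ H := hker (by rw [RingHom.mem_ker, map_sub, h, sub_self])
  rw [← H.sub_mem_iff_left hsub, sub_sub_cancel]

theorem exists_isPrime_comap_eq_of_notMem (hrange : ∀ s, ∃ r, φ r = φ e * s)
    (hann : ∀ r, φ r = 0 → e * r = 0) {H : Ideal R} [hH : H.IsPrime] (heH : e ∉ H) :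
    ∃ Q : Ideal S, Q.IsPrime ∧ φ e ∉ Q ∧ Q.comap φ = H := by
  have hker : RingHom.ker φ ≤ H := fun r hr =>
    (IsPrime.mul_mem_left_iff heH).mp (hann r hr ▸ H.zero_mem)
  choose g hg using hrange
  have hmul : ∀ s t, e * g (s * t) ∈ H ↔ g s * g t ∈ H := fun s t =>
    mem_iff_of_ker_le φ hker (by simp only [map_mul, hg]; ring)
  let Q : Ideal S :=
    { carrier := {s | g s ∈ H}
      zero_mem' := (mem_iff_of_ker_le φ hker (by rw [hg, mul_zero, map_zero])).mpr H.zero_mem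
      add_mem' := fun {s t} hs ht =>
        (mem_iff_of_ker_le φ hker (by rw [hg, map_add, hg, hg, mul_add])).mpr (H.add_mem hs ht)
      smul_mem' := fun c s hs =>
        (IsPrime.mul_mem_left_iff heH).mp ((hmul c s).mpr (H.mul_mem_left _ hs)) }
  have hmemQ : ∀ s, s ∈ Q ↔ g s ∈ H := fun _ => Iff.rfl
  refine ⟨Q, ⟨fun htop => heH ?_, fun {s t} hst => ?_⟩, fun he => heH ?_, ?_⟩
  · have h1 : g 1 ∈ H := (hmemQ 1).mp (htop ▸ Submodule.mem_top)
    exact (mem_iff_of_ker_le φ hker (by rw [hg, mul_one])).mp h1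
  · exact hH.mem_or_mem ((hmul s t).mp (H.mul_mem_left e hst))
  · have h1 : e * e ∈ H := (mem_iff_of_ker_le φ hker (by rw [hg, map_mul])).mp he
    exact (IsPrime.mul_mem_left_iff heH).mp h1
  · ext r
    rw [mem_comap, hmemQ, mem_iff_of_ker_le φ hker (r' := e * r) (by rw [hg, map_mul]),
      IsPrime.mul_mem_left_iff heH]

theorem comap_eq_comap_iff_of_notMem (hrange : ∀ s, ∃ r, φ r = φ e * s) {Q Q' : Ideal S}
    [Q.IsPrime] [Q'.IsPrime] (hQ : φ e ∉ Q) : Q.comap φ = Q'.comap φ ↔ Q = Q' := by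
  refine ⟨fun h => ?_, fun h => h ▸ rfl⟩
  have hQ' : φ e ∉ Q' := by
    rwa [← mem_comap, ← h, mem_comap]
  ext s
  obtain ⟨r, hr⟩ := hrange s
  rw [← IsPrime.mul_mem_left_iff hQ, ← IsPrime.mul_mem_left_iff hQ', ← hr, ← mem_comap,
    ← mem_comap, h]

end Ideal

namespace amalg

variable {A B : Type*} [CommRing A] [CommRing B] (f : A →+* B) (J : Ideal B)

theorem idealPf_eq_comap (P : Ideal A) : idealPf f J P = P.comap (pA f J) :=
  Submodule.copy_eq _ _ _

theorem idealQf_eq_comap (Q : Ideal B) : idealQf f J Q = Q.comap (pB f J) :=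
  Submodule.copy_eq _ _ _

theorem pA_surjective : Function.Surjective (pA f J) := fun a =>
  ⟨⟨(a, f a), by simp [mem_amalg_iff]⟩, rfl⟩

theorem mem_iff_exists_mem_ker_pA {b : B} :
    b ∈ J ↔ ∃ x ∈ RingHom.ker (pA f J), pB f J x = b := by
  constructor
  · intro hb
    exact ⟨⟨(0, b), by simpa [mem_amalg_iff] using hb⟩, rfl, rfl⟩
  · rintro ⟨x, hx, rfl⟩
    have hx1 : (x : A × B).1 = 0 := hx
    show (x : A × B).2 ∈ J
    simpa [hx1] using (mem_amalg_iff f J _).mp x.2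

theorem exists_pB_eq_mul {e : amalg f J} (he : e ∈ RingHom.ker (pA f J)) (b : B) :
    ∃ x, pB f J x = pB f J e * b := by
  have hJ : pB f J e * b ∈ J :=
    J.mul_mem_right b ((mem_iff_exists_mem_ker_pA f J).mpr ⟨e, he, rfl⟩)
  exact ⟨⟨(0, pB f J e * b), by simpa [mem_amalg_iff] using hJ⟩, rfl⟩

theorem mul_eq_zero_of_mem_ker {x y : amalg f J} (hx : x ∈ RingHom.ker (pA f J))
    (hy : y ∈ RingHom.ker (pB f J)) : x * y = 0 := by
  have hx1 : (x : A × B).1 = 0 := hx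
  have hy2 : (y : A × B).2 = 0 := hy
  exact Subtype.ext (Prod.ext (by simp [hx1]) (by simp [hy2]))

theorem idealPf_injective : Function.Injective (idealPf f J) := by
  intro P P' h
  simp only [idealPf_eq_comap] at h
  exact Ideal.comap_injective_of_surjective _ (pA_surjective f J) h

theorem eq_of_idealQf_eq {Q Q' : Ideal B} [Q.IsPrime] [Q'.IsPrime] (hJQ : ¬ J ≤ Q)
    (h : idealQf f J Q = idealQf f J Q') : Q = Q' := by
  obtain ⟨j, hj, hjQ⟩ := SetLike.not_le_iff_exists.mp hJQ
  obtain ⟨e, he, rfl⟩ := (mem_iff_exists_mem_ker_pA f J).mp hj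
  simp only [idealQf_eq_comap] at h
  exact (Ideal.comap_eq_comap_iff_of_notMem _ (exists_pB_eq_mul f J he) hjQ).mp h

variable {f J} {H : Ideal (amalg f J)}

theorem exists_idealPf_eq_iff [H.IsPrime] :
    (∃ P : Ideal A, P.IsPrime ∧ H = idealPf f J P) ↔ RingHom.ker (pA f J) ≤ H := by
  refine ⟨fun ⟨P, _, hP⟩ => hP ▸ idealPf_eq_comap f J P ▸ Ideal.ker_le_comap _,
    fun hker => ?_⟩
  refine ⟨H.map (pA f J), Ideal.map_isPrime_of_surjective (pA_surjective f J) hker, ?_⟩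
  rw [idealPf_eq_comap, Ideal.comap_map_of_surjective' _ (pA_surjective f J),
    sup_eq_left.mpr hker]

theorem exists_idealQf_eq_iff [H.IsPrime] :
    (∃ Q : Ideal B, Q.IsPrime ∧ ¬ J ≤ Q ∧ H = idealQf f J Q) ↔
      ¬ RingHom.ker (pA f J) ≤ H := by
  constructor
  · rintro ⟨Q, _, hJQ, rfl⟩ hker
    rw [idealQf_eq_comap] at hker
    refine hJQ fun j hj => ?_
    obtain ⟨x, hx, rfl⟩ := (mem_iff_exists_mem_ker_pA f J).mp hj
    exact hker hx
  · intro hker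
    obtain ⟨e, he, heH⟩ := SetLike.not_le_iff_exists.mp hker
    obtain ⟨Q, hQ, heQ, rfl⟩ := Ideal.exists_isPrime_comap_eq_of_notMem (pB f J)
      (exists_pB_eq_mul f J he) (fun _ hx => mul_eq_zero_of_mem_ker f J he hx) heH
    refine ⟨Q, hQ, fun hJQ => heQ (hJQ ?_), (idealQf_eq_comap f J Q).symm⟩
    exact (mem_iff_exists_mem_ker_pA f J).mpr ⟨e, he, rfl⟩

end amalg

/-- Every prime ideal of `A ⋈^f J` has exactly one of the two forms `P'^f` (for a unique
prime `P` of `A`) or `Q̄^f` (for a unique prime `Q` of `B` not containing `J`); conversely,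
all ideals of these two forms are prime. -/
theorem stmt4 {A B : Type*} [CommRing A] [CommRing B] (f : A →+* B) (J : Ideal B) :
    (∀ H : Ideal (amalg f J), H.IsPrime →
      ((∃! P : Ideal A, P.IsPrime ∧ H = idealPf f J P) ∧
        ¬ (∃ Q : Ideal B, Q.IsPrime ∧ ¬ J ≤ Q ∧ H = idealQf f J Q)) ∨
      ((∃! Q : Ideal B, Q.IsPrime ∧ ¬ J ≤ Q ∧ H = idealQf f J Q) ∧
        ¬ (∃ P : Ideal A, P.IsPrime ∧ H = idealPf f J P))) ∧
    (∀ P : Ideal A, P.IsPrime → (idealPf f J P).IsPrime) ∧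
    (∀ Q : Ideal B, Q.IsPrime → ¬ J ≤ Q → (idealQf f J Q).IsPrime) := by
  refine ⟨fun H hH => ?_, fun P hP => ?_, fun Q hQ _ => ?_⟩
  · by_cases hker : RingHom.ker (pA f J) ≤ H
    · refine Or.inl ⟨?_, amalg.exists_idealQf_eq_iff.not.mpr (not_not.mpr hker)⟩
      obtain ⟨P, hP⟩ := amalg.exists_idealPf_eq_iff.mpr hker
      exact ⟨P, hP, fun P' hP' => amalg.idealPf_injective f J (hP'.2.symm.trans hP.2)⟩
    · refine Or.inr ⟨?_, amalg.exists_idealPf_eq_iff.not.mpr hker⟩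
      obtain ⟨Q, hQ⟩ := amalg.exists_idealQf_eq_iff.mpr hker
      refine ⟨Q, hQ, fun Q' ⟨_, hJQ', hHQ'⟩ => ?_⟩
      have : Q.IsPrime := hQ.1
      exact amalg.eq_of_idealQf_eq f J hJQ' (hHQ'.symm.trans hQ.2.2)
  · rw [amalg.idealPf_eq_comap]
    exact Ideal.IsPrime.comap (hK := hP) _
  · rw [amalg.idealQf_eq_comap]
    exact Ideal.IsPrime.comap (hK := hQ) _
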